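/- arXiv:2512.21247 — 2 statements merged into one kernel-verified Lean document; each statement's English description precedes it below -/
import Mathlib

section
/- If A ⊆ ℝ is uncountable (of size ℵ₁) and for every limit of the construction one chooses a chain of countable sets closed under a fixed partial function f : A ⇀ A whose graph has size ℵ₁, then f agrees with one of countably many given strictly increasing partial functions on an uncountable set, provided those functions cover the squares of the slices of the resulting filtration. Concretely: let ⟨A_α : α < ω₁⟩ be an increasing continuous sequence of subsets of A with union A, A_0 = ∅, such that each A_α is closed under f and f⁻¹ (i.e., a ∈ A_α ∩ dom(f) implies f(a) ∈ A_α, and a ∈ A_α ∩ ran(f) implies f⁻¹(a) ∈ A_α), and suppose {f_n : n < ω} are partial functions with ⋃_n graph(f_n) ⊇ ⋃_α (A_{α+1}\A_α) × (A_{α+1}\A_α). If graph(f) is uncountable and each f_n is strictly increasing, then f is strictly increasing on an uncountable subset of its domain. -/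
def IsPFunGraph (F : Set (ℝ × ℝ)) : Prop :=
  ∀ p ∈ F, ∀ q ∈ F, p.1 = q.1 → p.2 = q.2

def IsIncrPFunGraph (F : Set (ℝ × ℝ)) : Prop :=
  IsPFunGraph F ∧ ∀ p ∈ F, ∀ q ∈ F, p.1 < q.1 → p.2 < q.2

/-- Slicewise coverable implies essentially increasing (pigeonhole step with a
filtration closed under `f`): if `⟨A_α : α < ω₁⟩` is an increasing continuous
sequence of subsets of `A` with `A_0 = ∅` and union `A`, each `A_α` closed
under the partial function `F` and its inverse, `F ⊆ A × A` has graph of size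
ℵ₁, and the strictly increasing partial functions `f n` cover the squares of
the slices, then `F` is strictly increasing on an uncountable subset. -/
theorem stmt_12 (A : Set ℝ) (Aseq : Ordinal.{0} → Set ℝ)
    (hmono : ∀ α β : Ordinal, α ≤ β → β < (Cardinal.aleph 1).ord → Aseq α ⊆ Aseq β)
    (h0 : Aseq 0 = ∅)
    (hcont : ∀ β < (Cardinal.aleph 1).ord, Order.IsSuccLimit β →
      Aseq β = ⋃ (α : Ordinal) (_ : α < β), Aseq α)
    (hunion : ⋃ (α : Ordinal) (_ : α < (Cardinal.aleph 1).ord), Aseq α = A)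
    (F : Set (ℝ × ℝ)) (hF : F ⊆ A ×ˢ A) (hFfun : IsPFunGraph F)
    (hFcard : Cardinal.mk F = Cardinal.aleph 1)
    (hclosed : ∀ α < (Cardinal.aleph 1).ord, ∀ p ∈ F,
      (p.1 ∈ Aseq α → p.2 ∈ Aseq α) ∧ (p.2 ∈ Aseq α → p.1 ∈ Aseq α))
    (f : ℕ → Set (ℝ × ℝ)) (hf : ∀ n, IsIncrPFunGraph (f n))
    (hcov : (⋃ (α : Ordinal) (_ : α < (Cardinal.aleph 1).ord),
        (Aseq (α + 1) \ Aseq α) ×ˢ (Aseq (α + 1) \ Aseq α)) ⊆ ⋃ n, f n) :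
    ∃ G ⊆ F, ¬ G.Countable ∧ IsIncrPFunGraph G := by

  classical
  -- Step 1: F ⊆ ⋃ n, f n
  have hFsub : F ⊆ ⋃ n, f n := by
    intro p hp
    apply hcov
    obtain ⟨h1, h2⟩ := hF hp
    rw [← hunion] at h1
    simp only [Set.mem_iUnion] at h1
    obtain ⟨α, hα, hmem⟩ := h1
    set S : Set Ordinal.{0} := {γ | p.1 ∈ Aseq γ ∧ γ < (Cardinal.aleph 1).ord} with hS
    have hSne : S.Nonempty := ⟨α, hmem, hα⟩
    have hmemS : sInf S ∈ S := csInf_mem hSne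
    rcases Ordinal.zero_or_succ_or_isSuccLimit (sInf S) with hz | ⟨γ, hγ⟩ | hlim
    · exfalso
      have := hmemS.1
      rw [hz, h0] at this
      exact this
    · -- successor case
      rw [← Ordinal.add_one_eq_succ] at hγ
      have hγlt : γ + 1 < (Cardinal.aleph 1).ord := hγ ▸ hmemS.2
      have hγlt' : γ < (Cardinal.aleph 1).ord :=
        lt_trans (Order.lt_succ γ) hγlt
      have hp1 : p.1 ∈ Aseq (γ + 1) := hγ ▸ hmemS.1
      have hp1n : p.1 ∉ Aseq γ := by
        intro hc
        have : γ ∈ S := ⟨hc, hγlt'⟩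
        have := csInf_le (OrderBot.bddBelow S) this
        rw [← hγ] at this
        exact absurd this (not_le.mpr (Order.lt_succ γ))
      have hp2 : p.2 ∈ Aseq (γ + 1) := (hclosed (γ + 1) hγlt p hp).1 hp1
      have hp2n : p.2 ∉ Aseq γ := fun hc => hp1n ((hclosed γ hγlt' p hp).2 hc)
      simp only [Set.mem_iUnion]
      exact ⟨γ, hγlt', ⟨hp1, hp1n⟩, ⟨hp2, hp2n⟩⟩
    · exfalso
      have heq := hcont (sInf S) hmemS.2 hlim
      have := hmemS.1
      rw [heq] at this
      simp only [Set.mem_iUnion] at this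
      obtain ⟨β, hβlt, hβmem⟩ := this
      have : β ∈ S := ⟨hβmem, lt_trans hβlt hmemS.2⟩
      exact absurd (csInf_le (OrderBot.bddBelow S) this) (not_le.mpr hβlt)
  -- Step 2: pigeonhole
  have hFnc : ¬ F.Countable := by
    intro hc
    have h1 : Cardinal.mk F ≤ Cardinal.aleph0 := Cardinal.mk_le_aleph0_iff.mpr hc.to_subtype
    rw [hFcard] at h1
    exact Cardinal.aleph0_lt_aleph_one.not_ge h1
  have : ∃ n, ¬ (F ∩ f n).Countable := by
    by_contra hall
    push_neg at hall
    apply hFnc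
    have : F = ⋃ n, F ∩ f n := by
      ext q
      simp only [Set.mem_iUnion, Set.mem_inter_iff]
      constructor
      · intro hq
        obtain ⟨n, hn⟩ := Set.mem_iUnion.mp (hFsub hq)
        exact ⟨n, hq, hn⟩
      · rintro ⟨n, hq, _⟩; exact hq
    rw [this]
    exact Set.countable_iUnion hall
  obtain ⟨n, hn⟩ := this
  refine ⟨F ∩ f n, Set.inter_subset_left, hn, ?_, ?_⟩
  · intro p hp q hq h
    exact (hf n).1 p hp.2 q hq.2 h
  · intro p hp q hq h
    exact (hf n).2 p hp.2 q hq.2 h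
end

section
/- If A ⊆ ℝ is good (witnessed by an enumeration {r_ξ : ξ < ω₁}), then A is essentially increasing in the following weak sense: for every uncountable partial injection f : A ⇀ A there exist two distinct points a, b ∈ dom(f) with a < b and f(a) ≤ f(b); in particular no uncountable partial injection on A is strictly decreasing. -/
/-- The countable ordinals, i.e. the ordinals below ω₁. -/
def Omega1 := {o : Ordinal.{0} // o < (Cardinal.aleph 1).ord}

noncomputable instance : LinearOrder Omega1 :=
  inferInstanceAs (LinearOrder {o : Ordinal.{0} // o < (Cardinal.aleph 1).ord})

/-- `A = {r ξ : ξ < ω₁}` is a good enumeration. -/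
def IsGood (r : Omega1 → ℝ) : Prop :=
  Function.Injective r ∧
    ∀ (n : ℕ) (a : Omega1 → Fin n → Omega1), (∀ α, StrictMono (a α)) →
      ∃ α β, α < β ∧ ∀ i, r (a α i) ≤ r (a β i)

lemma omega1_mk : Cardinal.mk Omega1 = Cardinal.aleph 1 := by
  have h := Ordinal.mk_Iio_ordinal (Cardinal.aleph 1).ord
  rw [Cardinal.card_ord, Cardinal.lift_aleph, Ordinal.lift_one] at h
  exact h

/-- From an uncountable set in `Omega1 × Omega1` we get an `ω₁`-sequence. -/
lemma exists_inj (T : Set (Omega1 × Omega1)) (hT : ¬ T.Countable) :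
    ∃ e : Omega1 → Omega1 × Omega1, Function.Injective e ∧ ∀ α, e α ∈ T := by
  have h1 : Cardinal.aleph 1 ≤ Cardinal.mk T := by
    by_contra h
    exact hT ((Cardinal.countable_iff_lt_aleph_one T).2 (lt_of_not_ge h))
  rw [← omega1_mk, Cardinal.le_def] at h1
  obtain ⟨f⟩ := h1
  exact ⟨fun α => (f α : Omega1 × Omega1),
    fun a b h => f.injective (Subtype.ext h), fun α => (f α).2⟩

/-- Key combinatorial step from goodness with `n = 2`. -/
lemma key (r : Omega1 → ℝ) (hr : IsGood r) (e : Omega1 → Omega1 × Omega1)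
    (hlt : ∀ α, (e α).1 < (e α).2)
    (h1 : Function.Injective fun α => (e α).1)
    (h2 : Function.Injective fun α => (e α).2) :
    ∃ α β, r (e α).1 < r (e β).1 ∧ r (e α).2 < r (e β).2 := by
  set a : Omega1 → Fin 2 → Omega1 := fun α i => if (i : ℕ) = 0 then (e α).1 else (e α).2
  have hmono : ∀ α, StrictMono (a α) := by
    intro α i j hij
    fin_cases i <;> fin_cases j <;> simp_all [a]
  obtain ⟨α, β, hαβ, h⟩ := hr.2 2 a hmono
  have h0 := h 0
  have hone := h 1
  simp only [a, Fin.val_zero, Fin.val_one] at h0 hone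
  norm_num at h0 hone
  refine ⟨α, β, lt_of_le_of_ne h0 ?_, lt_of_le_of_ne hone ?_⟩
  · exact fun hh => hαβ.ne (h1 (hr.1 hh))
  · exact fun hh => hαβ.ne (h2 (hr.1 hh))

/-- If `A = range r ⊆ ℝ` is good, then for every partial injection on `A` with
uncountable graph there are points `a < b` of its domain with `f a ≤ f b`; in
particular no uncountable partial injection on `A` is strictly decreasing. -/
theorem stmt_19 (r : Omega1 → ℝ) (hr : IsGood r)
    (F : Set (ℝ × ℝ)) (hF : F ⊆ (Set.range r) ×ˢ (Set.range r))
    (hfun : IsPFunGraph F)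
    (hinj : ∀ p ∈ F, ∀ q ∈ F, p.2 = q.2 → p.1 = q.1)
    (hunc : ¬ F.Countable) :
    (∃ p ∈ F, ∃ q ∈ F, p.1 < q.1 ∧ p.2 ≤ q.2) ∧
      ¬ ∀ p ∈ F, ∀ q ∈ F, p.1 < q.1 → q.2 < p.2 := by
  have main : ∃ p ∈ F, ∃ q ∈ F, p.1 < q.1 ∧ p.2 ≤ q.2 := by
    set S : Set (Omega1 × Omega1) := {q | (r q.1, r q.2) ∈ F} with hSdef
    have hFS : F = (fun q : Omega1 × Omega1 => (r q.1, r q.2)) '' S := by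
      ext p
      constructor
      · intro hp
        obtain ⟨⟨ξ, hξ⟩, ⟨η, hη⟩⟩ := hF hp
        refine ⟨(ξ, η), ?_, ?_⟩
        · show (r ξ, r η) ∈ F
          rw [hξ, hη]; simpa using hp
        · simp [hξ, hη]
      · rintro ⟨q, hq, rfl⟩; exact hq
    have hSunc : ¬ S.Countable := fun h => hunc (hFS ▸ h.image _)
    -- split S into three pieces
    have hsplit : S = {q ∈ S | q.1 = q.2} ∪ {q ∈ S | q.1 < q.2} ∪ {q ∈ S | q.2 < q.1} := by
      ext q
      simp only [Set.mem_union, Set.mem_setOf_eq]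
      constructor
      · intro hq
        rcases lt_trichotomy q.1 q.2 with h | h | h
        · exact Or.inl (Or.inr ⟨hq, h⟩)
        · exact Or.inl (Or.inl ⟨hq, h⟩)
        · exact Or.inr ⟨hq, h⟩
      · rintro ((⟨h, _⟩ | ⟨h, _⟩) | ⟨h, _⟩) <;> exact h
    have huncone : ¬ ({q ∈ S | q.1 = q.2} : Set _).Countable ∨
        ¬ ({q ∈ S | q.1 < q.2} : Set _).Countable ∨
        ¬ ({q ∈ S | q.2 < q.1} : Set _).Countable := by
      by_contra h
      push_neg at h
      exact hSunc (hsplit ▸ ((h.1.union h.2.1).union h.2.2))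
    rcases huncone with h | h | h
    · -- uncountably many fixed points: take any two
      have : ¬ ({q ∈ S | q.1 = q.2} : Set _).Subsingleton := by
        intro hs; exact h hs.countable
      rw [Set.not_subsingleton_iff] at this
      obtain ⟨x, hx, y, hy, hxy⟩ := this
      obtain ⟨hxS, hxe⟩ := hx
      obtain ⟨hyS, hye⟩ := hy
      have hne : r x.1 ≠ r y.1 := by
        intro hh
        exact hxy (Prod.ext (hr.1 hh) (hxe ▸ hye ▸ hr.1 hh))
      rcases hne.lt_or_gt with hlt | hlt
      · exact ⟨(r x.1, r x.2), hxS, (r y.1, r y.2), hyS, hlt,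
          le_of_lt (by rwa [← hxe, ← hye])⟩
      · exact ⟨(r y.1, r y.2), hyS, (r x.1, r x.2), hxS, hlt,
          le_of_lt (by rwa [← hxe, ← hye])⟩
    · -- increasing pairs
      obtain ⟨e, he, heT⟩ := exists_inj _ h
      have hS1 : ∀ α, e α ∈ S := fun α => (heT α).1
      have h1 : Function.Injective fun α => (e α).1 := by
        intro α β hh
        apply he
        have := hfun _ (hS1 α) _ (hS1 β) (by simp [hh])
        exact Prod.ext hh (hr.1 this)
      have h2 : Function.Injective fun α => (e α).2 := by
        intro α β hh
        apply he
        have := hinj _ (hS1 α) _ (hS1 β) (by simp [hh])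
        exact Prod.ext (hr.1 this) hh
      obtain ⟨α, β, ha, hb⟩ := key r hr e (fun α => (heT α).2) h1 h2
      exact ⟨(r (e α).1, r (e α).2), hS1 α, (r (e β).1, r (e β).2), hS1 β, ha, hb.le⟩
    · -- decreasing pairs: swap coordinates
      obtain ⟨e, he, heT⟩ := exists_inj _ h
      have hS1 : ∀ α, e α ∈ S := fun α => (heT α).1
      set e' : Omega1 → Omega1 × Omega1 := fun α => ((e α).2, (e α).1) with he'def
      have h1 : Function.Injective fun α => (e' α).1 := by
        intro α β hh
        simp only [e'] at hh
        apply he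
        have := hinj _ (hS1 α) _ (hS1 β) (by simp [hh])
        exact Prod.ext (hr.1 this) hh
      have h2 : Function.Injective fun α => (e' α).2 := by
        intro α β hh
        simp only [e'] at hh
        apply he
        have := hfun _ (hS1 α) _ (hS1 β) (by simp [hh])
        exact Prod.ext hh (hr.1 this)
      obtain ⟨α, β, ha, hb⟩ := key r hr e' (fun α => (heT α).2) h1 h2
      simp only [e'] at ha hb
      exact ⟨(r (e α).1, r (e α).2), hS1 α, (r (e β).1, r (e β).2), hS1 β, hb, ha.le⟩
  refine ⟨main, ?_⟩
  intro h
  obtain ⟨p, hp, q, hq, h1, h2⟩ := main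
  exact absurd (h p hp q hq h1) (not_lt.2 h2)
end
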